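/- Let G be a (P_k + tP_2)-saturated graph with k ≥ 2 and t ≥ 1 having at least 2 isolated vertices. Then every connected component Q of G with at most k − 1 vertices satisfies: |Q| is odd, or |Q| = k − 1 and k is odd. -/

import Mathlib

open SimpleGraph

open SimpleGraph

/-- `H` has an (injective) copy inside `G`. -/
def ContainsCopy {α β : Type*} (H : SimpleGraph α) (G : SimpleGraph β) : Prop :=
  ∃ f : α ↪ β, ∀ a b, H.Adj a b → G.Adj (f a) (f b)

/-- The graph obtained from `G` by adding the edge `uv`. -/
def addE {V : Type*} (G : SimpleGraph V) (u v : V) : SimpleGraph V :=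
  G ⊔ SimpleGraph.fromEdgeSet {s(u, v)}

/-- `G` is `H`-saturated. -/
def IsSaturated {α β : Type*} (H : SimpleGraph α) (G : SimpleGraph β) : Prop :=
  ¬ ContainsCopy H G ∧ ∀ u v : β, u ≠ v → ¬ G.Adj u v → ContainsCopy H (addE G u v)

/-- The path `P_k` on `k` vertices. -/
def pathG (k : ℕ) : SimpleGraph (Fin k) where
  Adj x y := x.val + 1 = y.val ∨ y.val + 1 = x.val
  symm := ⟨fun x y h => h.symm⟩
  loopless := ⟨fun x h => by omega⟩

/-- `tP_2`: the disjoint union of `t` independent edges. -/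
def tP2 (t : ℕ) : SimpleGraph (Fin t × Fin 2) where
  Adj x y := x.1 = y.1 ∧ x.2 ≠ y.2
  symm := ⟨fun x y h => ⟨h.1.symm, h.2.symm⟩⟩
  loopless := ⟨fun x h => h.2 rfl⟩

/-- Disjoint union of two graphs. -/
def disjSum {α β : Type*} (G : SimpleGraph α) (H : SimpleGraph β) :
    SimpleGraph (α ⊕ β) where
  Adj x y := Sum.LiftRel G.Adj H.Adj x y
  symm := by
    constructor
    rintro x y (h | h)
    · exact Sum.LiftRel.inl h.symm
    · exact Sum.LiftRel.inr h.symm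
  loopless := by
    constructor
    rintro x (h | h)
    · exact h.ne rfl
    · exact h.ne rfl

/-- The linear forest `P_k + tP_2`. -/
def PkPlustP2 (k t : ℕ) : SimpleGraph (Fin k ⊕ Fin t × Fin 2) :=
  disjSum (pathG k) (tP2 t)

/-- The saturation number `sat(n, H)`. -/
noncomputable def satNumber {α : Type*} (H : SimpleGraph α) (n : ℕ) : ℕ :=
  sInf {m | ∃ G : SimpleGraph (Fin n), IsSaturated H G ∧ G.edgeSet.ncard = m}

/-- The matching number `α'(G)`. -/
noncomputable def matchNum {V : Type*} (G : SimpleGraph V) : ℕ :=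
  sSup {m | ContainsCopy (tP2 m) G}

/-- `α_k(G)`: the largest `m` with `P_k + mP_2 ⊆ G`. -/
noncomputable def alphaK {V : Type*} (k : ℕ) (G : SimpleGraph V) : ℕ :=
  sSup {m | ContainsCopy (PkPlustP2 k m) G}

set_option linter.unusedVariables false
set_option linter.unusedSectionVars false
section Prelim
open Function
variable {V : Type*} [Fintype V] {G : SimpleGraph V}

lemma addE_adj {u v x y : V} (h : u ≠ v) :
    (addE G u v).Adj x y ↔ G.Adj x y ∨ s(x, y) = s(u, v) := by
  simp only [addE, SimpleGraph.sup_adj, SimpleGraph.fromEdgeSet_adj, Set.mem_singleton_iff]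
  constructor
  · rintro (h | ⟨h1, h2⟩); exacts [Or.inl h, Or.inr h1]
  · rintro (h1 | h1)
    · exact Or.inl h1
    · refine Or.inr ⟨h1, ?_⟩
      rw [Sym2.eq_iff] at h1
      rcases h1 with ⟨rfl, rfl⟩ | ⟨rfl, rfl⟩
      · exact h
      · exact h.symm

lemma isolated_not_adj {w : V} (h : G.neighborSet w = ∅) (v : V) : ¬ G.Adj w v := by
  intro hadj
  have : v ∈ G.neighborSet w := hadj
  rw [h] at this; exact this

lemma reach_isolated {w v : V} (h : G.neighborSet w = ∅) (hr : G.Reachable w v) : v = w := by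
  obtain ⟨p⟩ := hr
  cases p with
  | nil => rfl
  | cons hadj _ => exact absurd hadj (isolated_not_adj h _)

lemma containsCopy_iff_fun {α β : Type*} (H : SimpleGraph α) (G : SimpleGraph β) :
    ContainsCopy H G ↔ ∃ f : α → β, Injective f ∧ ∀ a b, H.Adj a b → G.Adj (f a) (f b) := by
  constructor
  · rintro ⟨f, hf⟩; exact ⟨f, f.injective, hf⟩
  · rintro ⟨f, hinj, hf⟩; exact ⟨⟨f, hinj⟩, hf⟩

lemma mem_supp_of_adj {C : G.ConnectedComponent} {a b : V} (ha : a ∈ C.supp) (hab : G.Adj a b) :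
    b ∈ C.supp := by
  rw [SimpleGraph.ConnectedComponent.mem_supp_iff] at ha ⊢
  rw [← ha]
  exact SimpleGraph.ConnectedComponent.sound hab.symm.reachable

lemma reachable_of_mem_supp {C : G.ConnectedComponent} {a b : V} (ha : a ∈ C.supp)
    (hb : b ∈ C.supp) : G.Reachable a b := by
  rw [SimpleGraph.ConnectedComponent.mem_supp_iff] at ha hb
  exact SimpleGraph.ConnectedComponent.exact (ha.trans hb.symm)

lemma ncard_ge_of_inj {r : ℕ} (S : Set V) (g : Fin r → V) (hg : Injective g)
    (h : ∀ j, g j ∈ S) : r ≤ S.ncard := by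
  classical
  have h1 : (Finset.univ.image g).card = r := by
    rw [Finset.card_image_of_injective _ hg, Finset.card_univ, Fintype.card_fin]
  rw [← h1, Set.ncard_eq_toFinset_card']
  apply Finset.card_le_card
  intro x hx
  simp only [Finset.mem_image] at hx
  obtain ⟨j, _, rfl⟩ := hx
  simpa using h j

/-- chain of adjacencies gives reachability -/
lemma chain_reach (g : ℕ → V) (a b : ℕ) (hab : a ≤ b)
    (h : ∀ m, a ≤ m → m < b → G.Adj (g m) (g (m + 1))) : G.Reachable (g a) (g b) := by
  induction b with
  | zero => have : a = 0 := by omega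
            subst this; exact SimpleGraph.Reachable.refl _
  | succ n ih =>
    rcases Nat.lt_or_ge a (n+1) with hl | hl
    · have h1 : G.Reachable (g a) (g n) := ih (by omega) (fun m hm hm' => h m hm (by omega))
      exact h1.trans (h n (by omega) (by omega)).reachable
    · have : a = n + 1 := by omega
      subst this; exact SimpleGraph.Reachable.refl _
end Prelim
section Matchings
open Function
variable {V : Type*} [Fintype V] {G : SimpleGraph V} {Q : Set V}

/-- the vertices of a pairs-family -/
def coords {V : Type*} {c : ℕ} (r : Fin c → V × V) : Fin c × Fin 2 → V :=
  fun x => if x.2 = 0 then (r x.1).1 else (r x.1).2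

/-- pairs-representation of a matching inside `Q` -/
def PM {V : Type*} (G : SimpleGraph V) (Q : Set V) (c : ℕ) (r : Fin c → V × V) : Prop :=
  (∀ i, G.Adj (r i).1 (r i).2) ∧ (∀ i, (r i).1 ∈ Q ∧ (r i).2 ∈ Q) ∧ Injective (coords r)

/-- involution-representation of a matching inside `Q` -/
def IM {V : Type*} (G : SimpleGraph V) (Q : Set V) (μ : V → V) : Prop :=
  Involutive μ ∧ ∀ v, μ v ≠ v → G.Adj v (μ v) ∧ v ∈ Q

def suppI {V : Type*} (μ : V → V) : Set V := {v | μ v ≠ v}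

lemma coords_fst {c : ℕ} (r : Fin c → V × V) (i : Fin c) : coords r (i, 0) = (r i).1 := rfl
lemma coords_snd {c : ℕ} (r : Fin c → V × V) (i : Fin c) : coords r (i, 1) = (r i).2 := rfl

lemma ncard_range_coords {c : ℕ} {r : Fin c → V × V} (h : Injective (coords r)) :
    (Set.range (coords r)).ncard = 2 * c := by
  rw [← Set.image_univ, Set.ncard_image_of_injective _ h, Set.ncard_univ,
    Nat.card_eq_fintype_card]
  simp [Fintype.card_prod, Nat.mul_comm]

-- distinctness consequences
lemma PM.fst_inj {c : ℕ} {r : Fin c → V × V} (h : PM G Q c r) {i j : Fin c}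
    (hij : (r i).1 = (r j).1) : i = j := by
  have := h.2.2 (a₁ := (i, 0)) (a₂ := (j, 0)) (by simpa [coords_fst] using hij)
  exact (Prod.mk.injEq _ _ _ _ ▸ this).1
lemma PM.snd_inj {c : ℕ} {r : Fin c → V × V} (h : PM G Q c r) {i j : Fin c}
    (hij : (r i).2 = (r j).2) : i = j := by
  have := h.2.2 (a₁ := (i, 1)) (a₂ := (j, 1)) (by simpa [coords_snd] using hij)
  exact (Prod.mk.injEq _ _ _ _ ▸ this).1
lemma PM.fst_ne_snd {c : ℕ} {r : Fin c → V × V} (h : PM G Q c r) (i j : Fin c) :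
    (r i).1 ≠ (r j).2 := by
  intro he
  have := h.2.2 (a₁ := (i, 0)) (a₂ := (j, 1)) (by simpa [coords_fst, coords_snd] using he)
  simp at this

/-- C1 : pairs to involution -/
lemma PM.toIM {c : ℕ} {r : Fin c → V × V} (h : PM G Q c r) :
    ∃ μ : V → V, IM G Q μ ∧ suppI μ = Set.range (coords r) := by
  classical
  set μ : V → V := fun v =>
    if h1 : ∃ i, (r i).1 = v then (r h1.choose).2
    else if h2 : ∃ i, (r i).2 = v then (r h2.choose).1 else v with hμ
  have hfst : ∀ i, μ ((r i).1) = (r i).2 := by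
    intro i
    have h1 : ∃ j, (r j).1 = (r i).1 := ⟨i, rfl⟩
    rw [hμ]; simp only [h1, dif_pos]
    rw [h.fst_inj h1.choose_spec]
  have hsnd : ∀ i, μ ((r i).2) = (r i).1 := by
    intro i
    have h1 : ¬ ∃ j, (r j).1 = (r i).2 := by rintro ⟨j, hj⟩; exact h.fst_ne_snd j i hj
    have h2 : ∃ j, (r j).2 = (r i).2 := ⟨i, rfl⟩
    rw [hμ]; simp only [h1, h2, dif_neg, dif_pos, not_false_iff]
    rw [h.snd_inj h2.choose_spec]
  have hother : ∀ v, v ∉ Set.range (coords r) → μ v = v := by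
    intro v hv
    have h1 : ¬ ∃ i, (r i).1 = v := by rintro ⟨i, hi⟩; exact hv ⟨(i, 0), hi⟩
    have h2 : ¬ ∃ i, (r i).2 = v := by rintro ⟨i, hi⟩; exact hv ⟨(i, 1), hi⟩
    rw [hμ]; simp only [h1, h2, dif_neg, not_false_iff]
  have hcases : ∀ v : V, (∃ i, (r i).1 = v) ∨ (∃ i, (r i).2 = v) ∨ v ∉ Set.range (coords r) := by
    intro v
    by_cases hv : v ∈ Set.range (coords r)
    · obtain ⟨⟨i, e⟩, he⟩ := hv
      fin_cases e
      · exact Or.inl ⟨i, he⟩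
      · exact Or.inr (Or.inl ⟨i, he⟩)
    · exact Or.inr (Or.inr hv)
  have hinv : Involutive μ := by
    intro v
    rcases hcases v with ⟨i, rfl⟩ | ⟨i, rfl⟩ | hv
    · rw [hfst, hsnd]
    · rw [hsnd, hfst]
    · rw [hother v hv, hother v hv]
  refine ⟨μ, ⟨hinv, ?_⟩, ?_⟩
  · intro v hv
    rcases hcases v with ⟨i, rfl⟩ | ⟨i, rfl⟩ | hv'
    · rw [hfst]; exact ⟨h.1 i, (h.2.1 i).1⟩
    · rw [hsnd]; exact ⟨(h.1 i).symm, (h.2.1 i).2⟩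
    · exact absurd (hother v hv') hv
  · ext v
    simp only [suppI, Set.mem_setOf_eq]
    constructor
    · intro hv
      by_contra hc
      exact hv (hother v hc)
    · intro hv
      rcases hcases v with ⟨i, rfl⟩ | ⟨i, rfl⟩ | hv'
      · rw [hfst]; exact (Ne.symm (h.fst_ne_snd i i))
      · rw [hsnd]; exact (h.fst_ne_snd i i)
      · exact absurd hv hv'
end Matchings
section C2
open Function
variable {V : Type*} [Fintype V] {G : SimpleGraph V} {Q : Set V}

/-- C2 : involution to pairs -/
lemma IM.toPM {μ : V → V} (h : IM G Q μ) :
    ∃ (c : ℕ) (r : Fin c → V × V), PM G Q c r ∧ Set.range (coords r) = suppI μ := by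
  classical
  set T : Finset V := Finset.univ.filter (fun v => μ v ≠ v) with hT
  have hTmem : ∀ v, v ∈ T ↔ μ v ≠ v := by intro v; simp [hT]
  set E : Finset (Sym2 V) := T.image (fun v => s(v, μ v)) with hE
  -- every edge in E containing w equals s(w, μ w)
  have hedge : ∀ w, ∀ e ∈ E, w ∈ e → e = s(w, μ w) := by
    intro w e he hw
    rw [hE, Finset.mem_image] at he
    obtain ⟨v, hv, rfl⟩ := he
    rw [Sym2.mem_iff] at hw
    rcases hw with rfl | rfl
    · rfl
    · rw [h.1 v]; exact Sym2.eq_swap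
  set c : ℕ := E.card with hc
  set pk : Fin c → Sym2 V := fun i => (E.equivFin.symm i : Sym2 V) with hpk
  have hpkE : ∀ i, pk i ∈ E := fun i => (E.equivFin.symm i).2
  have hpkinj : Injective pk := by
    intro i j hij
    have := Subtype.ext (p := fun e => e ∈ E) hij
    exact E.equivFin.symm.injective this
  -- choose an endpoint for each edge
  have hpick : ∀ i, ∃ v, v ∈ T ∧ s(v, μ v) = pk i := by
    intro i
    have := hpkE i
    rw [hE, Finset.mem_image] at this
    obtain ⟨v, hv, he⟩ := this
    exact ⟨v, hv, he⟩
  set r : Fin c → V × V := fun i => ((hpick i).choose, μ (hpick i).choose) with hr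
  have hrT : ∀ i, (r i).1 ∈ T ∧ (r i).2 = μ (r i).1 ∧ s((r i).1, (r i).2) = pk i := by
    intro i
    exact ⟨(hpick i).choose_spec.1, rfl, (hpick i).choose_spec.2⟩
  have hne : ∀ i, (r i).1 ≠ (r i).2 := by
    intro i
    have := (hTmem _).mp (hrT i).1
    rw [(hrT i).2.1]; exact fun hx => this hx.symm
  have hmemedge : ∀ i, ∀ w, (w = (r i).1 ∨ w = (r i).2) → (w ∈ T ∧ s(w, μ w) = pk i) := by
    intro i w hw
    have h1 := (hrT i).1
    have h2 := (hrT i).2.1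
    rcases hw with rfl | rfl
    · exact ⟨h1, (hrT i).2.2⟩
    · have hwT : μ (r i).1 ∈ T := by
        rw [hTmem]
        rw [h.1 ((r i).1)]
        exact fun hx => (hTmem _).mp h1 hx.symm
      constructor
      · rw [h2]; exact hwT
      · rw [h2, h.1 ((r i).1)]
        rw [← (hrT i).2.2, h2]
        exact Sym2.eq_swap
  -- injectivity of coords
  have hcinj : Injective (coords r) := by
    rintro ⟨i, e⟩ ⟨j, e'⟩ hij
    have hwi : coords r (i, e) = (r i).1 ∨ coords r (i, e) = (r i).2 := by
      unfold coords; split <;> simp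
    have hwj : coords r (j, e') = (r j).1 ∨ coords r (j, e') = (r j).2 := by
      unfold coords; split <;> simp
    have hij2 : i = j := by
      have hi := hmemedge i _ hwi
      have hj := hmemedge j _ hwj
      rw [hij] at hi
      exact hpkinj (hi.2.symm.trans hj.2)
    subst hij2
    have h0 : ∀ (x : Fin 2), x = 0 ∨ x = 1 := by decide
    have he : e = e' := by
      by_contra hee
      rcases h0 e with rfl | rfl <;> rcases h0 e' with rfl | rfl
      · exact hee rfl
      · exact hne i (by rwa [coords_fst, coords_snd] at hij)
      · exact hne i (by rw [coords_snd, coords_fst] at hij; exact hij.symm)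
      · exact hee rfl
    rw [he]
  refine ⟨c, r, ⟨?_, ?_, hcinj⟩, ?_⟩
  · intro i
    have h1 : μ (r i).1 ≠ (r i).1 := (hTmem _).mp (hrT i).1
    rw [(hrT i).2.1]
    exact (h.2 _ h1).1
  · intro i
    have h1 : μ (r i).1 ≠ (r i).1 := (hTmem _).mp (hrT i).1
    refine ⟨(h.2 _ h1).2, ?_⟩
    rw [(hrT i).2.1]
    have hm : μ (μ (r i).1) ≠ μ (r i).1 := fun hx => h1 (h.1.injective hx)
    exact (h.2 _ hm).2
  · ext w
    simp only [Set.mem_range, suppI, Set.mem_setOf_eq]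
    constructor
    · rintro ⟨⟨i, e⟩, rfl⟩
      have hwi : coords r (i, e) = (r i).1 ∨ coords r (i, e) = (r i).2 := by
        unfold coords; split <;> simp
      rcases hwi with hh | hh <;> rw [hh]
      · exact (hTmem _).mp (hmemedge i _ (Or.inl rfl)).1
      · exact (hTmem _).mp (hmemedge i _ (Or.inr rfl)).1
    · intro hw
      have hwT : w ∈ T := (hTmem w).mpr (fun hx => hw (by rw [hx]))
      have hEw : s(w, μ w) ∈ E := Finset.mem_image_of_mem _ hwT
      set i := E.equivFin ⟨_, hEw⟩ with hi
      have hpki : pk i = s(w, μ w) := by rw [hpk]; rw [hi]; simp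
      have h2 := (hrT i).2.2.trans hpki
      rw [Sym2.eq_iff] at h2
      rcases h2 with ⟨h3, _⟩ | ⟨_, h3⟩
      · exact ⟨(i, 0), h3⟩
      · exact ⟨(i, 1), h3⟩
end C2
section Rebuild
open Function
variable {V : Type*} [Fintype V] {G : SimpleGraph V} {Q : Set V}

lemma fin2_cases (x : Fin 2) : x = 0 ∨ x = 1 := by omega

lemma coords_adj {c : ℕ} {r : Fin c → V × V} (h : ∀ i, G.Adj (r i).1 (r i).2)
    {i : Fin c} {e e' : Fin 2} (hee : e ≠ e') :
    G.Adj (coords r (i, e)) (coords r (i, e')) := by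
  rcases fin2_cases e with rfl | rfl <;> rcases fin2_cases e' with rfl | rfl
  · exact absurd rfl hee
  · exact h i
  · exact (h i).symm
  · exact absurd rfl hee

lemma coords_mem_Q {c : ℕ} {r : Fin c → V × V} (h : PM G Q c r) (x : Fin c × Fin 2) :
    coords r x ∈ Q := by
  obtain ⟨i, e⟩ := x
  rcases fin2_cases e with rfl | rfl
  · exact (h.2.1 i).1
  · exact (h.2.1 i).2

lemma rebuild {k t : ℕ} (hsat1 : ¬ ContainsCopy (PkPlustP2 k t) G)
    {s c : ℕ} (hst : c + s + 1 = t)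
    (P : Fin k → V) (R : Fin s → V × V)
    (hout : ∀ x : Fin k ⊕ Fin s × Fin 2, Sum.elim P (fun y => coords R y) x ∉ Q)
    (hinjO : Injective (Sum.elim P (fun y => coords R y)))
    (hPadj : ∀ (j j' : Fin k), (j : ℕ) + 1 = (j' : ℕ) → G.Adj (P j) (P j'))
    (hRadj : ∀ i, G.Adj (R i).1 (R i).2)
    {M : Fin c → V × V} (hM : PM G Q c M)
    {a b : V} (hab : G.Adj a b) (haQ : a ∈ Q) (hbQ : b ∈ Q)
    (haM : ∀ x, coords M x ≠ a) (hbM : ∀ x, coords M x ≠ b) : False := by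
  classical
  apply hsat1
  rw [containsCopy_iff_fun]
  set g : Fin t → Fin 2 → V := fun i e =>
    if h : (i : ℕ) < s then coords R (⟨i, h⟩, e)
    else if h' : (i : ℕ) < s + c then coords M (⟨(i : ℕ) - s, by omega⟩, e)
    else if e = 0 then a else b with hg
  set f : Fin k ⊕ Fin t × Fin 2 → V := Sum.elim P (fun x => g x.1 x.2) with hf
  have hgR : ∀ (i : Fin t) (e : Fin 2) (h : (i : ℕ) < s), g i e = coords R (⟨i, h⟩, e) := by
    intro i e h; rw [hg]; simp only [h, dif_pos]
  have hgM : ∀ (i : Fin t) (e : Fin 2) (h : ¬ (i : ℕ) < s) (h' : (i : ℕ) < s + c),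
      g i e = coords M (⟨(i : ℕ) - s, by omega⟩, e) := by
    intro i e h h'; rw [hg]; simp only [h, h', dif_neg, dif_pos, not_false_iff]
  have hgab : ∀ (i : Fin t) (e : Fin 2) (h : ¬ (i : ℕ) < s) (h' : ¬ (i : ℕ) < s + c),
      g i e = if e = 0 then a else b := by
    intro i e h h'; rw [hg]; simp only [h, h', dif_neg, not_false_iff]
  -- values of g are in Q iff not in R-range
  have hgQM : ∀ (i : Fin t) (e : Fin 2), ¬ (i : ℕ) < s → g i e ∈ Q := by
    intro i e h
    by_cases h' : (i : ℕ) < s + c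
    · rw [hgM i e h h']; exact coords_mem_Q hM _
    · rw [hgab i e h h']
      split
      · exact haQ
      · exact hbQ
  refine ⟨f, ?_, ?_⟩
  · -- injectivity
    have hPQ : ∀ j, P j ∉ Q := fun j => hout (Sum.inl j)
    have hRQ : ∀ x, coords R x ∉ Q := fun x => hout (Sum.inr x)
    rintro (j | ⟨i, e⟩) (j' | ⟨i', e'⟩) hxy
    · have : P j = P j' := hxy
      have := hinjO (a₁ := Sum.inl j) (a₂ := Sum.inl j') this
      simpa using this
    · exfalso
      have hv : P j = g i' e' := hxy
      by_cases h : (i' : ℕ) < s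
      · rw [hgR i' e' h] at hv
        have := hinjO (a₁ := Sum.inl j) (a₂ := Sum.inr (⟨i', h⟩, e')) hv
        simp at this
      · exact hPQ j (by rw [hv]; exact hgQM i' e' h)
    · exfalso
      have hv : g i e = P j' := hxy
      by_cases h : (i : ℕ) < s
      · rw [hgR i e h] at hv
        have := hinjO (a₁ := Sum.inr (⟨i, h⟩, e)) (a₂ := Sum.inl j') hv
        simp at this
      · exact hPQ j' (by rw [← hv]; exact hgQM i e h)
    · -- inr/inr
      have hv : g i e = g i' e' := hxy
      by_cases h : (i : ℕ) < s <;> by_cases h' : (i' : ℕ) < s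
      · rw [hgR i e h, hgR i' e' h'] at hv
        have := hinjO (a₁ := Sum.inr (⟨i, h⟩, e)) (a₂ := Sum.inr (⟨i', h'⟩, e')) hv
        simp only [Sum.inr.injEq, Prod.mk.injEq, Fin.mk.injEq] at this
        have hi : i = i' := Fin.ext this.1
        rw [hi, this.2]
      · exfalso
        exact hRQ _ (by rw [hgR i e h] at hv; rw [hv]; exact hgQM i' e' h')
      · exfalso
        exact hRQ _ (by rw [hgR i' e' h'] at hv; rw [← hv]; exact hgQM i e h)
      · by_cases h2 : (i : ℕ) < s + c <;> by_cases h2' : (i' : ℕ) < s + c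
        · rw [hgM i e h h2, hgM i' e' h' h2'] at hv
          have := hM.2.2 hv
          simp only [Prod.mk.injEq, Fin.mk.injEq] at this
          have h3 := this.1
          have hi : i = i' := Fin.ext (by omega)
          rw [hi, this.2]
        · exfalso
          rw [hgM i e h h2, hgab i' e' h' h2'] at hv
          split at hv
          · exact haM _ hv
          · exact hbM _ hv
        · exfalso
          rw [hgab i e h h2, hgM i' e' h' h2'] at hv
          split at hv
          · exact haM _ hv.symm
          · exact hbM _ hv.symm
        · have hi : i = i' := by
            have := i.isLt; have := i'.isLt
            apply Fin.ext; omega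
          subst hi
          rw [hgab i e h h2, hgab i e' h h2] at hv
          have hee : e = e' := by
            by_contra hee
            rcases fin2_cases e with rfl | rfl <;> rcases fin2_cases e' with rfl | rfl <;>
              simp_all [G.ne_of_adj hab]
          rw [hee]
  · -- adjacency
    rintro x y hadj
    have hadj' : Sum.LiftRel (pathG k).Adj (tP2 t).Adj x y := hadj
    cases hadj' with
    | inl hpq =>
      have hp : (_ : ℕ) + 1 = _ ∨ (_ : ℕ) + 1 = _ := hpq
      rcases hp with hp | hp
      · exact hPadj _ _ hp
      · exact (hPadj _ _ hp).symm
    | inr hpq =>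
      rename_i p q
      obtain ⟨i, e⟩ := p
      obtain ⟨i', e'⟩ := q
      have h12 : i = i' ∧ e ≠ e' := hpq
      obtain ⟨rfl, hee⟩ := h12
      show G.Adj (g i e) (g i e')
      by_cases h : (i : ℕ) < s
      · rw [hgR i e h, hgR i e' h]; exact coords_adj hRadj hee
      · by_cases h' : (i : ℕ) < s + c
        · rw [hgM i e h h', hgM i e' h h']; exact coords_adj hM.1 hee
        · rw [hgab i e h h', hgab i e' h h']
          rcases fin2_cases e with rfl | rfl <;> rcases fin2_cases e' with rfl | rfl
          · exact absurd rfl hee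
          · simpa using hab
          · simpa using hab.symm
          · exact absurd rfl hee
end Rebuild
section Extract
open Function
variable {V : Type*} [Fintype V] {G : SimpleGraph V}

lemma mem_supp_of_reachable {C : G.ConnectedComponent} {a b : V} (ha : a ∈ C.supp)
    (h : G.Reachable a b) : b ∈ C.supp := by
  rw [SimpleGraph.ConnectedComponent.mem_supp_iff] at ha ⊢
  rw [← ha]
  exact SimpleGraph.ConnectedComponent.sound h.symm

lemma extract {k t : ℕ} (hk : 2 ≤ k) (hsat : IsSaturated (PkPlustP2 k t) G)
    {C : G.ConnectedComponent} (hC : C.supp.ncard + 2 ≤ k)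
    {w : V} (hw : G.neighborSet w = ∅) (hwC : w ∉ C.supp)
    {u : V} (hu : u ∈ C.supp) :
    ∃ (s c : ℕ) (P : Fin k → V) (R : Fin s → V × V) (M : Fin c → V × V),
      c + s + 1 = t ∧
      (∀ x, Sum.elim P (fun y => coords R y) x ∉ C.supp) ∧
      Injective (Sum.elim P (fun y => coords R y)) ∧
      (∀ (j j' : Fin k), (j : ℕ) + 1 = (j' : ℕ) → G.Adj (P j) (P j')) ∧
      (∀ i, G.Adj (R i).1 (R i).2) ∧
      PM G C.supp c M ∧
      (∀ x, coords M x ≠ u) := by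
  classical
  have huw : u ≠ w := fun h => hwC (h ▸ hu)
  have hnadj : ¬ G.Adj u w := fun h => isolated_not_adj hw u h.symm
  obtain ⟨f, hinj, hfadj⟩ := (containsCopy_iff_fun _ _).mp (hsat.2 u w huw hnadj)
  have haddE : ∀ a b, (PkPlustP2 k t).Adj a b →
      G.Adj (f a) (f b) ∨ s(f a, f b) = s(u, w) := by
    intro a b hab
    exact (addE_adj huw).mp (hfadj a b hab)
  have huse : ∃ a b, (PkPlustP2 k t).Adj a b ∧ ¬ G.Adj (f a) (f b) := by
    by_contra hcon
    push_neg at hcon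
    exact hsat.1 ((containsCopy_iff_fun _ _).mpr ⟨f, hinj, hcon⟩)
  obtain ⟨a0, b0, hab0, hnab0⟩ := huse
  have he0 : s(f a0, f b0) = s(u, w) := (haddE a0 b0 hab0).resolve_left hnab0
  obtain ⟨a', b', hab', hfa', hfb'⟩ :
      ∃ a' b', (PkPlustP2 k t).Adj a' b' ∧ f a' = w ∧ f b' = u := by
    rcases Sym2.eq_iff.mp he0 with ⟨h1, h2⟩ | ⟨h1, h2⟩
    · exact ⟨b0, a0, hab0.symm, h2, h1⟩
    · exact ⟨a0, b0, hab0, h1, h2⟩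
  have hnbr : ∀ x, (PkPlustP2 k t).Adj a' x → f x = u := by
    intro x hx
    rcases haddE a' x hx with h | h
    · rw [hfa'] at h
      exact absurd h (isolated_not_adj hw _)
    · rw [hfa'] at h
      rcases Sym2.eq_iff.mp h with ⟨h1, h2⟩ | ⟨h1, h2⟩
      · exact absurd h1.symm huw
      · exact h2
  have huniq : ∀ x, (PkPlustP2 k t).Adj a' x → x = b' := by
    intro x hx
    exact hinj ((hnbr x hx).trans hfb'.symm)
  have hGedge : ∀ x y, (PkPlustP2 k t).Adj x y → x ≠ a' → y ≠ a' → G.Adj (f x) (f y) := by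
    intro x y hxy hxa hya
    rcases haddE x y hxy with h | h
    · exact h
    · exfalso
      rcases Sym2.eq_iff.mp h with ⟨h1, h2⟩ | ⟨h1, h2⟩
      · exact hya (hinj (h2.trans hfa'.symm))
      · exact hxa (hinj (h1.trans hfa'.symm))
  -- the path vertices, as ℕ-indexed with default u
  set pv : ℕ → V := fun m => if h : m < k then f (Sum.inl ⟨m, h⟩) else u with hpv
  have hpvdef : ∀ (m : ℕ) (h : m < k), pv m = f (Sum.inl ⟨m, h⟩) := by
    intro m h; rw [hpv]; simp only [h, dif_pos]
  cases a' with
  | inl i0 =>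
    exfalso
    -- i0 is an endpoint
    have hADJ : ∀ (m m' : ℕ) (h : m < k) (h' : m' < k), m + 1 = m' →
        (PkPlustP2 k t).Adj (Sum.inl ⟨m, h⟩) (Sum.inl ⟨m', h'⟩) :=
      fun m m' h h' hmm => Sum.LiftRel.inl (Or.inl hmm)
    have hend : (i0 : ℕ) = 0 ∨ (i0 : ℕ) = k - 1 := by
      by_contra hcon
      push_neg at hcon
      have hi1 : (i0 : ℕ) - 1 < k := by omega
      have hi2 : (i0 : ℕ) + 1 < k := by have := i0.isLt; omega
      have e1 : Sum.inl (α := Fin k) (β := Fin t × Fin 2) ⟨(i0 : ℕ) - 1, hi1⟩ = b' := by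
        apply huniq
        exact Sum.LiftRel.inl (Or.inr (by simp; omega))
      have e2 : Sum.inl (α := Fin k) (β := Fin t × Fin 2) ⟨(i0 : ℕ) + 1, hi2⟩ = b' := by
        apply huniq
        exact Sum.LiftRel.inl (Or.inl (by simp))
      rw [← e1] at e2
      simp only [Sum.inl.injEq, Fin.mk.injEq] at e2
      omega
    -- G-adjacency of consecutive path vertices avoiding i0
    have hpadj : ∀ (m : ℕ), m + 1 < k → m ≠ (i0 : ℕ) → m + 1 ≠ (i0 : ℕ) →
        G.Adj (pv m) (pv (m + 1)) := by
      intro m hm hm1 hm2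
      rw [hpvdef m (by omega), hpvdef (m+1) hm]
      apply hGedge _ _ (hADJ m (m+1) (by omega) hm rfl)
      · intro hcc; rw [Sum.inl.injEq] at hcc; apply hm1
        rw [← hcc]
      · intro hcc; rw [Sum.inl.injEq] at hcc; apply hm2
        rw [← hcc]
    -- k-1 vertices of C.supp
    have hbig : k - 1 ≤ C.supp.ncard := by
      rcases hend with h0 | h0
      · -- i0 = 0, pv 1 = u, vertices pv 1 .. pv (k-1)
        have hu1 : pv 1 = u := by
          rw [hpvdef 1 (by omega)]
          apply hnbr
          exact Sum.LiftRel.inl (Or.inl (by simp [h0]))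
        have hmem : ∀ m, 1 ≤ m → m < k → pv m ∈ C.supp := by
          intro m h1m hmk
          have : G.Reachable (pv 1) (pv m) :=
            chain_reach pv 1 m h1m (fun j hj hj' => hpadj j (by omega) (by omega) (by omega))
          exact mem_supp_of_reachable (hu1 ▸ hu) this
        apply ncard_ge_of_inj C.supp (fun j : Fin (k-1) => pv ((j : ℕ) + 1))
        · intro j j' hjj
          have hjj' : pv ((j : ℕ) + 1) = pv ((j' : ℕ) + 1) := hjj
          rw [hpvdef _ (by have := j.isLt; omega), hpvdef _ (by have := j'.isLt; omega)] at hjj'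
          have := hinj hjj'
          simp only [Sum.inl.injEq, Fin.mk.injEq] at this
          exact Fin.ext (by omega)
        · intro j
          exact hmem _ (by omega) (by have := j.isLt; omega)
      · -- i0 = k-1, pv (k-2) = u, vertices pv 0 .. pv (k-2)
        have hu1 : pv (k-2) = u := by
          rw [hpvdef (k-2) (by omega)]
          apply hnbr
          exact Sum.LiftRel.inl (Or.inr (by simp; omega))
        have hmem : ∀ m, m ≤ k - 2 → pv m ∈ C.supp := by
          intro m hmk
          have : G.Reachable (pv m) (pv (k-2)) :=
            chain_reach pv m (k-2) hmk (fun j hj hj' => hpadj j (by omega) (by omega) (by omega))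
          exact mem_supp_of_reachable (hu1 ▸ hu) this.symm
        apply ncard_ge_of_inj C.supp (fun j : Fin (k-1) => pv (j : ℕ))
        · intro j j' hjj
          have hjj' : pv (j : ℕ) = pv (j' : ℕ) := hjj
          rw [hpvdef _ (by have := j.isLt; omega), hpvdef _ (by have := j'.isLt; omega)] at hjj'
          have := hinj hjj'
          simp only [Sum.inl.injEq, Fin.mk.injEq] at this
          exact Fin.ext (by omega)
        · intro j
          exact hmem _ (by have := j.isLt; omega)
    omega
  | inr p0 =>
    obtain ⟨i0, e0⟩ := p0
    -- path vertices are all outside C.supp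
    have hpathadj : ∀ (m : ℕ), m + 1 < k → G.Adj (pv m) (pv (m + 1)) := by
      intro m hm
      rw [hpvdef m (by omega), hpvdef (m+1) hm]
      apply hGedge _ _ (Sum.LiftRel.inl (Or.inl (by simp))) (by simp) (by simp)
    have hPout : ∀ (m : ℕ), m < k → pv m ∉ C.supp := by
      intro m hmk hmem
      have hall : ∀ (m' : ℕ), m' < k → pv m' ∈ C.supp := by
        intro m' hm'
        rcases le_or_gt m m' with hle | hlt
        · exact mem_supp_of_reachable hmem
            (chain_reach pv m m' hle (fun j hj hj' => hpathadj j (by omega)))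
        · exact mem_supp_of_reachable hmem
            (chain_reach pv m' m (by omega) (fun j hj hj' => hpathadj j (by omega))).symm
      have : k ≤ C.supp.ncard := by
        apply ncard_ge_of_inj C.supp (fun j : Fin k => pv (j : ℕ))
        · intro j j' hjj
          have hjj' : pv (j : ℕ) = pv (j' : ℕ) := hjj
          rw [hpvdef _ j.isLt, hpvdef _ j'.isLt] at hjj'
          have := hinj hjj'
          simp only [Sum.inl.injEq, Fin.mk.injEq] at this
          exact Fin.ext this
        · intro j; exact hall _ j.isLt
      omega
    -- pairs move together
    have hpair : ∀ (i : Fin t), i ≠ i0 → ∀ (e e' : Fin 2),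
        f (Sum.inr (i, e)) ∈ C.supp → f (Sum.inr (i, e')) ∈ C.supp := by
      intro i hi e e' hmem
      by_cases hee : e = e'
      · rwa [← hee]
      · apply mem_supp_of_adj hmem
        apply hGedge (Sum.inr (i, e)) (Sum.inr (i, e'))
          (Sum.LiftRel.inr (show (tP2 t).Adj (i, e) (i, e') from ⟨rfl, hee⟩))
        · simp only [ne_eq, Sum.inr.injEq, Prod.mk.injEq, not_and]
          intro hii; exact absurd hii hi
        · simp only [ne_eq, Sum.inr.injEq, Prod.mk.injEq, not_and]
          intro hii; exact absurd hii hi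
    -- b' is the partner of (i0, e0)
    have hb' : ∃ eb : Fin 2, b' = Sum.inr (i0, eb) := by
      have hL : Sum.LiftRel (pathG k).Adj (tP2 t).Adj (Sum.inr (i0, e0)) b' := hab'
      cases hL with
      | inr hq =>
        rename_i q
        obtain ⟨iq, eq'⟩ := q
        have hqq : i0 = iq ∧ e0 ≠ eq' := hq
        exact ⟨eq', by rw [hqq.1]⟩
    obtain ⟨eb, hbeq⟩ := hb'
    have hfu : f (Sum.inr (i0, eb)) = u := by rw [← hbeq]; exact hfb'
    set I : Finset (Fin t) := Finset.univ.filter (fun i => i ≠ i0 ∧ f (Sum.inr (i, 0)) ∈ C.supp)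
      with hI
    set O : Finset (Fin t) := Finset.univ.filter (fun i => i ≠ i0 ∧ f (Sum.inr (i, 0)) ∉ C.supp)
      with hO
    have hcs : I.card + O.card + 1 = t := by
      have hdisj : Disjoint I O := by
        rw [Finset.disjoint_left]
        intro x hxI hxO
        rw [hI, Finset.mem_filter] at hxI
        rw [hO, Finset.mem_filter] at hxO
        exact hxO.2.2 hxI.2.2
      have hunion : I ∪ O = Finset.univ.erase i0 := by
        ext x
        simp only [hI, hO, Finset.mem_union, Finset.mem_filter, Finset.mem_univ, true_and,
          Finset.mem_erase]
        constructor
        · rintro (⟨hx1, _⟩ | ⟨hx1, _⟩) <;> exact ⟨hx1, trivial⟩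
        · intro hx
          by_cases hmm : f (Sum.inr (x, 0)) ∈ C.supp
          · exact Or.inl ⟨hx.1, hmm⟩
          · exact Or.inr ⟨hx.1, hmm⟩
      have hcard := Finset.card_union_of_disjoint hdisj
      rw [hunion] at hcard
      have h2 : (Finset.univ.erase i0).card = t - 1 := by
        rw [Finset.card_erase_of_mem (Finset.mem_univ i0), Finset.card_univ, Fintype.card_fin]
      have ht1 : 0 < t := i0.pos
      omega
    set eI : Fin I.card ≃ {x // x ∈ I} := I.equivFin.symm with heI
    set eO : Fin O.card ≃ {x // x ∈ O} := O.equivFin.symm with heO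
    set M : Fin I.card → V × V :=
      fun j => (f (Sum.inr ((eI j).1, 0)), f (Sum.inr ((eI j).1, 1))) with hM
    set R : Fin O.card → V × V :=
      fun j => (f (Sum.inr ((eO j).1, 0)), f (Sum.inr ((eO j).1, 1))) with hR
    set P : Fin k → V := fun j => f (Sum.inl j) with hP
    have h01 : (0 : Fin 2) ≠ 1 := by decide
    have hIprop : ∀ j, (eI j).1 ≠ i0 ∧ f (Sum.inr ((eI j).1, 0)) ∈ C.supp := by
      intro j
      have h4 : (eI j).1 ∈ Finset.univ.filter
          (fun i => i ≠ i0 ∧ f (Sum.inr (i, 0)) ∈ C.supp) := by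
        rw [← hI]; exact (eI j).2
      exact (Finset.mem_filter.mp h4).2
    have hOprop : ∀ j, (eO j).1 ≠ i0 ∧ f (Sum.inr ((eO j).1, 0)) ∉ C.supp := by
      intro j
      have h4 : (eO j).1 ∈ Finset.univ.filter
          (fun i => i ≠ i0 ∧ f (Sum.inr (i, 0)) ∉ C.supp) := by
        rw [← hO]; exact (eO j).2
      exact (Finset.mem_filter.mp h4).2
    have hcoordsM : ∀ x : Fin I.card × Fin 2, coords M x = f (Sum.inr ((eI x.1).1, x.2)) := by
      rintro ⟨j, e⟩
      rcases fin2_cases e with rfl | rfl <;> rfl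
    have hcoordsR : ∀ x : Fin O.card × Fin 2, coords R x = f (Sum.inr ((eO x.1).1, x.2)) := by
      rintro ⟨j, e⟩
      rcases fin2_cases e with rfl | rfl <;> rfl
    refine ⟨O.card, I.card, P, R, M, hcs, ?_, ?_, ?_, ?_, ⟨?_, ?_, ?_⟩, ?_⟩
    · rintro (j | ⟨j, e⟩)
      · show f (Sum.inl j) ∉ C.supp
        have h3 := hPout j.1 j.isLt
        rwa [hpvdef _ j.isLt, Fin.eta] at h3
      · show coords R (j, e) ∉ C.supp
        rw [hcoordsR]
        intro hmem
        exact (hOprop j).2 (hpair _ (hOprop j).1 e 0 hmem)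
    · rintro (j | ⟨j, e⟩) (j' | ⟨j', e'⟩) hxy
      · have h3 : f (Sum.inl j) = f (Sum.inl j') := hxy
        have h4 := hinj h3
        rw [Sum.inl.injEq] at h4
        rw [h4]
      · exfalso
        have h3 : f (Sum.inl j) = coords R (j', e') := hxy
        rw [hcoordsR] at h3
        have h4 := hinj h3
        simp at h4
      · exfalso
        have h3 : coords R (j, e) = f (Sum.inl j') := hxy
        rw [hcoordsR] at h3
        have h4 := hinj h3
        simp at h4
      · have h3 : coords R (j, e) = coords R (j', e') := hxy
        rw [hcoordsR, hcoordsR] at h3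
        have h4 := hinj h3
        simp only [Sum.inr.injEq, Prod.mk.injEq] at h4
        have h5 : j = j' := eO.injective (Subtype.ext h4.1)
        rw [h5, h4.2]
    · intro j j' hjj
      show G.Adj (f (Sum.inl j)) (f (Sum.inl j'))
      exact hGedge _ _ (Sum.LiftRel.inl (Or.inl hjj)) (by simp) (by simp)
    · intro j
      show G.Adj (f (Sum.inr ((eO j).1, 0))) (f (Sum.inr ((eO j).1, 1)))
      apply hGedge (Sum.inr ((eO j).1, 0)) (Sum.inr ((eO j).1, 1))
        (Sum.LiftRel.inr (show (tP2 t).Adj ((eO j).1, 0) ((eO j).1, 1) from ⟨rfl, h01⟩))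
      · simp only [ne_eq, Sum.inr.injEq, Prod.mk.injEq, not_and]
        intro hii
        exact absurd hii (hOprop j).1
      · simp only [ne_eq, Sum.inr.injEq, Prod.mk.injEq, not_and]
        intro hii
        exact absurd hii (hOprop j).1
    · intro j
      show G.Adj (f (Sum.inr ((eI j).1, 0))) (f (Sum.inr ((eI j).1, 1)))
      apply hGedge (Sum.inr ((eI j).1, 0)) (Sum.inr ((eI j).1, 1))
        (Sum.LiftRel.inr (show (tP2 t).Adj ((eI j).1, 0) ((eI j).1, 1) from ⟨rfl, h01⟩))
      · simp only [ne_eq, Sum.inr.injEq, Prod.mk.injEq, not_and]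
        intro hii
        exact absurd hii (hIprop j).1
      · simp only [ne_eq, Sum.inr.injEq, Prod.mk.injEq, not_and]
        intro hii
        exact absurd hii (hIprop j).1
    · intro j
      exact ⟨(hIprop j).2, hpair _ (hIprop j).1 0 1 (hIprop j).2⟩
    · rintro ⟨j, e⟩ ⟨j', e'⟩ hxy
      rw [hcoordsM, hcoordsM] at hxy
      have h4 := hinj hxy
      simp only [Sum.inr.injEq, Prod.mk.injEq] at h4
      have h5 : j = j' := eI.injective (Subtype.ext h4.1)
      rw [h5, h4.2]
    · intro x hx
      rw [hcoordsM, ← hfu] at hx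
      have h4 := hinj hx
      simp only [Sum.inr.injEq, Prod.mk.injEq] at h4
      exact (hIprop x.1).1 h4.1
end Extract
section MatchUtil
open Function
variable {V : Type*} [Fintype V] {G : SimpleGraph V} {Q : Set V}

/-- no matching in Q can have more pairs than the extracted one -/
lemma nobig {k t : ℕ} (hsat1 : ¬ ContainsCopy (PkPlustP2 k t) G)
    {s c : ℕ} (hst : c + s + 1 = t)
    {P : Fin k → V} {R : Fin s → V × V}
    (hout : ∀ x, Sum.elim P (fun y => coords R y) x ∉ Q)
    (hinjO : Injective (Sum.elim P (fun y => coords R y)))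
    (hPadj : ∀ (j j' : Fin k), (j : ℕ) + 1 = (j' : ℕ) → G.Adj (P j) (P j'))
    (hRadj : ∀ i, G.Adj (R i).1 (R i).2)
    {c' : ℕ} {r : Fin c' → V × V} (hr : PM G Q c' r) : c' ≤ c := by
  by_contra hcon
  push_neg at hcon
  set r' : Fin c → V × V := fun j => r (Fin.castLE (le_of_lt hcon) j) with hr'
  have hcoords : ∀ x : Fin c × Fin 2, coords r' x = coords r (Fin.castLE (le_of_lt hcon) x.1, x.2) := by
    rintro ⟨j, e⟩
    rcases fin2_cases e with rfl | rfl <;> rfl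
  have hPM' : PM G Q c r' := by
    refine ⟨fun i => hr.1 _, fun i => hr.2.1 _, ?_⟩
    rintro ⟨j, e⟩ ⟨j', e'⟩ hxy
    rw [hcoords, hcoords] at hxy
    have := hr.2.2 hxy
    simp only [Prod.mk.injEq] at this
    have h5 : (j : ℕ) = (j' : ℕ) := by
      have := congrArg Fin.val this.1
      simpa using this
    rw [Fin.ext h5, this.2]
  set a := (r ⟨c, hcon⟩).1
  set b := (r ⟨c, hcon⟩).2
  refine rebuild hsat1 hst P R hout hinjO hPadj hRadj hPM' (hr.1 ⟨c, hcon⟩)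
    (hr.2.1 ⟨c, hcon⟩).1 (hr.2.1 ⟨c, hcon⟩).2 ?_ ?_
  · intro x hx
    rw [hcoords] at hx
    have : coords r (Fin.castLE (le_of_lt hcon) x.1, x.2) = coords r (⟨c, hcon⟩, 0) := hx
    have h6 := hr.2.2 this
    simp only [Prod.mk.injEq] at h6
    have := congrArg Fin.val h6.1
    simp only [Fin.coe_castLE] at this
    have := x.1.isLt
    omega
  · intro x hx
    rw [hcoords] at hx
    have : coords r (Fin.castLE (le_of_lt hcon) x.1, x.2) = coords r (⟨c, hcon⟩, 1) := hx
    have h6 := hr.2.2 this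
    simp only [Prod.mk.injEq] at h6
    have := congrArg Fin.val h6.1
    simp only [Fin.coe_castLE] at this
    have := x.1.isLt
    omega

/-- a matching missing both endpoints of an edge can be extended -/
lemma extend_matching {μ : V → V} (h : IM G Q μ) {a b : V} (hab : G.Adj a b)
    (haQ : a ∈ Q) (hbQ : b ∈ Q) (ha : μ a = a) (hb : μ b = b) :
    ∃ μ' : V → V, IM G Q μ' ∧ (suppI μ').ncard = (suppI μ).ncard + 2 := by
  classical
  have hne : a ≠ b := hab.ne
  set μ' : V → V := fun v => if v = a then b else if v = b then a else μ v with hμ'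
  have hva : μ' a = b := by rw [hμ']; simp
  have hvb : μ' b = a := by rw [hμ']; simp [hne.symm]
  have hvo : ∀ v, v ≠ a → v ≠ b → μ' v = μ v := by
    intro v h1 h2; rw [hμ']; simp [h1, h2]
  have hmo : ∀ v, v ≠ a → v ≠ b → μ v ≠ a ∧ μ v ≠ b := by
    intro v h1 h2
    constructor
    · intro hc
      apply h1
      rw [← h.1 v, hc, ha]
    · intro hc
      apply h2
      rw [← h.1 v, hc, hb]
  have hinv : Involutive μ' := by
    intro v
    by_cases h1 : v = a
    · rw [h1, hva, hvb]
    · by_cases h2 : v = b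
      · rw [h2, hvb, hva]
      · rw [hvo v h1 h2, hvo _ (hmo v h1 h2).1 (hmo v h1 h2).2, h.1]
  have hsupp : suppI μ' = suppI μ ∪ {a, b} := by
    ext v
    simp only [suppI, Set.mem_setOf_eq, Set.mem_union, Set.mem_insert_iff,
      Set.mem_singleton_iff]
    by_cases h1 : v = a
    · rw [h1, hva]
      exact ⟨fun _ => Or.inr (Or.inl rfl), fun _ => hne.symm⟩
    · by_cases h2 : v = b
      · rw [h2, hvb]
        exact ⟨fun _ => Or.inr (Or.inr rfl), fun _ => hne⟩
      · rw [hvo v h1 h2]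
        constructor
        · exact fun hv => Or.inl hv
        · rintro (hv | hv | hv)
          · exact hv
          · exact absurd hv h1
          · exact absurd hv h2
  refine ⟨μ', ⟨hinv, ?_⟩, ?_⟩
  · intro v hv
    by_cases h1 : v = a
    · subst h1; rw [hva]; exact ⟨hab, haQ⟩
    · by_cases h2 : v = b
      · subst h2; rw [hvb]; exact ⟨hab.symm, hbQ⟩
      · rw [hvo v h1 h2] at hv ⊢
        exact h.2 v hv
  · rw [hsupp, Set.ncard_union_eq ?_ (Set.toFinite _) (Set.toFinite _)]
    · rw [Set.ncard_pair hne]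
    · rw [Set.disjoint_left]
      intro v hv
      simp only [Set.mem_insert_iff, Set.mem_singleton_iff]
      push_neg
      constructor
      · intro hc; subst hc; exact hv ha
      · intro hc; subst hc; exact hv hb
end MatchUtil
section Glue
variable {V : Type*} [Fintype V]

lemma ncard_split (T S : Set V) : T.ncard = (T ∩ S).ncard + (T \ S).ncard := by
  rw [← Set.ncard_union_eq ?_ (Set.toFinite _) (Set.toFinite _), Set.inter_union_diff]
  rw [Set.disjoint_left]
  rintro v ⟨_, hv2⟩ ⟨_, hv3⟩
  exact hv3 hv2

lemma ncard_union_glue {A T S : Set V} (hAS : A ⊆ S) :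
    (A ∪ (T \ S)).ncard = A.ncard + (T \ S).ncard := by
  rw [Set.ncard_union_eq ?_ (Set.toFinite _) (Set.toFinite _)]
  rw [Set.disjoint_left]
  rintro v hv1 ⟨_, hv3⟩
  exact hv3 (hAS hv1)
end Glue
theorem small_component_odd {V : Type*} [Fintype V] (G : SimpleGraph V) (k t : ℕ)
    (hk : 2 ≤ k) (ht : 1 ≤ t) (hsat : IsSaturated (PkPlustP2 k t) G)
    (w₁ w₂ : V) (hw : w₁ ≠ w₂)
    (h1 : G.neighborSet w₁ = ∅) (h2 : G.neighborSet w₂ = ∅)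
    (C : G.ConnectedComponent) (hC : C.supp.ncard ≤ k - 1) :
    Odd C.supp.ncard ∨ (C.supp.ncard = k - 1 ∧ Odd k) := by
  classical
  rcases Nat.even_or_odd C.supp.ncard with hEven | hOdd
  swap
  · exact Or.inl hOdd
  obtain ⟨u₀, hu₀⟩ : ∃ u, u ∈ C.supp := by
    obtain ⟨v, hv⟩ := C.exists_rep
    exact ⟨v, (SimpleGraph.ConnectedComponent.mem_supp_iff C v).mpr hv⟩
  have hpos : 1 ≤ C.supp.ncard := by
    rw [Nat.one_le_iff_ne_zero]
    intro hc
    rw [Set.ncard_eq_zero (Set.toFinite _)] at hc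
    rw [hc] at hu₀
    exact hu₀
  by_cases heq : C.supp.ncard = k - 1
  · refine Or.inr ⟨heq, ?_⟩
    have hE1 : Even (k - 1) := heq ▸ hEven
    obtain ⟨e1, he1⟩ := hE1
    exact ⟨e1, by omega⟩
  exfalso
  have hn2 : C.supp.ncard + 2 ≤ k := by omega
  have hw1C : w₁ ∉ C.supp := by
    intro hmem
    have hsub : C.supp ⊆ {w₁} := fun v hv =>
      reach_isolated h1 (reachable_of_mem_supp hmem hv)
    have hle := Set.ncard_le_ncard hsub (Set.toFinite _)
    rw [Set.ncard_singleton] at hle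
    obtain ⟨e1, he1⟩ := hEven
    omega
  obtain ⟨s₀, c₀, P₀, R₀, M₀, hst₀, hout₀, hinjO₀, hPadj₀, hRadj₀, hPM₀, hMu₀⟩ :=
    extract hk hsat hn2 h1 hw1C hu₀
  set Q := C.supp with hQdef
  set m := c₀ with hm
  have hbound : ∀ {c' : ℕ} {r : Fin c' → V × V}, PM G Q c' r → c' ≤ m :=
    fun h => nobig hsat.1 hst₀ hout₀ hinjO₀ hPadj₀ hRadj₀ h
  have hG2 : ∀ μ : V → V, IM G Q μ → (suppI μ).ncard ≤ 2 * m := by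
    intro μ hμ
    obtain ⟨c', r, hPM, hrange⟩ := hμ.toPM
    rw [← hrange, ncard_range_coords hPM.2.2]
    have := hbound hPM
    omega
  have hmatch : ∀ u ∈ Q, ∃ μ : V → V, IM G Q μ ∧ μ u = u ∧ (suppI μ).ncard = 2 * m := by
    intro u hu
    obtain ⟨s₁, c₁, P₁, R₁, M₁, hst₁, hout₁, hinjO₁, hPadj₁, hRadj₁, hPM₁, hMu₁⟩ :=
      extract hk hsat hn2 h1 hw1C hu
    obtain ⟨μ, hIM, hsupp⟩ := hPM₁.toIM
    have hc1 : c₁ = m :=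
      le_antisymm (hbound hPM₁) (nobig hsat.1 hst₁ hout₁ hinjO₁ hPadj₁ hRadj₁ hPM₀)
    refine ⟨μ, hIM, ?_, ?_⟩
    · by_contra hcc
      have hmem : u ∈ suppI μ := hcc
      rw [hsupp] at hmem
      obtain ⟨x, hx⟩ := hmem
      exact hMu₁ x hx
    · rw [hsupp, ncard_range_coords hPM₁.2.2, hc1]
  have hext : ∀ (μ : V → V), IM G Q μ → (suppI μ).ncard = 2 * m → ∀ a b, G.Adj a b →
      a ∈ Q → μ a = a → μ b = b → False := by
    intro μ hμ hsz a b hab haQ ha hb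
    obtain ⟨μ', hμ', hsz'⟩ := extend_matching hμ hab haQ (mem_supp_of_adj haQ hab) ha hb
    have := hG2 μ' hμ'
    omega
  set Bad : ℕ → Prop := fun d => ∃ (μ : V → V) (x y : V), IM G Q μ ∧
    (suppI μ).ncard = 2 * m ∧ μ x = x ∧ μ y = y ∧ x ≠ y ∧ x ∈ Q ∧ y ∈ Q ∧
    ∃ p : G.Walk x y, p.length = d with hBadDef
  have hBadEx : ∃ d, Bad d := by
    obtain ⟨μ₀, hμ₀, hμ₀u, hμ₀sz⟩ := hmatch u₀ hu₀
    have hu₀supp : u₀ ∉ suppI μ₀ := fun hc => hc hμ₀u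
    have hyex : ∃ y ∈ Q, μ₀ y = y ∧ y ≠ u₀ := by
      by_contra hcon
      push_neg at hcon
      have hsub : Q ⊆ suppI μ₀ ∪ {u₀} := by
        intro v hv
        by_cases hvv : μ₀ v = v
        · exact Or.inr (hcon v hv hvv)
        · exact Or.inl hvv
      have hsub2 : suppI μ₀ ∪ {u₀} ⊆ Q := by
        intro v hv
        rcases hv with hv | hv
        · exact (hμ₀.2 v hv).2
        · rw [hv]; exact hu₀
      have hueq : (suppI μ₀ ∪ {u₀}).ncard = 2 * m + 1 := by
        rw [Set.ncard_union_eq ?_ (Set.toFinite _) (Set.toFinite _), hμ₀sz,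
          Set.ncard_singleton]
        rw [Set.disjoint_left]
        intro v hv
        simp only [Set.mem_singleton_iff]
        intro hc
        rw [hc] at hv
        exact hu₀supp hv
      have hle1 := Set.ncard_le_ncard hsub (Set.toFinite _)
      have hle2 := Set.ncard_le_ncard hsub2 (Set.toFinite _)
      obtain ⟨e1, he1⟩ := hEven
      rw [hueq] at hle1 hle2
      omega
    obtain ⟨y, hyQ, hy, hyu⟩ := hyex
    obtain ⟨p⟩ := reachable_of_mem_supp hu₀ hyQ
    exact ⟨p.length, μ₀, u₀, y, hμ₀, hμ₀sz, hμ₀u, hy, fun hc => hyu hc.symm, hu₀, hyQ, p, rfl⟩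
  have hdspec : Bad (Nat.find hBadEx) := Nat.find_spec hBadEx
  set d := Nat.find hBadEx with hd
  have hdmin : ∀ j, j < d → ¬ Bad j := fun j hj => Nat.find_min hBadEx hj
  obtain ⟨μ, x, y, hμIM, hμsz, hμx, hμy, hxy, hxQ, hyQ, p, hplen⟩ := hdspec
  cases p with
  | nil => exact hxy rfl
  | cons hadj q =>
    rename_i z
    rw [SimpleGraph.Walk.length_cons] at hplen
    have hzQ : z ∈ Q := mem_supp_of_adj hxQ hadj
    have hxz : x ≠ z := G.ne_of_adj hadj
    have hd2 : 2 ≤ d := by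
      rcases Nat.eq_zero_or_pos q.length with h0 | h0
      · exfalso
        have hzy : z = y := q.eq_of_length_eq_zero h0
        subst hzy
        exact hext μ hμIM hμsz x z hadj hxQ hμx hμy
      · omega
    have hμz : μ z ≠ z := by
      intro hc
      exact hdmin 1 (by omega) ⟨μ, x, z, hμIM, hμsz, hμx, hc, hxz, hxQ, hzQ,
        SimpleGraph.Walk.cons hadj SimpleGraph.Walk.nil, by simp⟩
    obtain ⟨ν, hνIM, hνz, hνsz⟩ := hmatch z hzQ
    have hνx : ν x ≠ x := by
      intro hc
      exact hdmin 1 (by omega) ⟨ν, x, z, hνIM, hνsz, hc, hνz, hxz, hxQ, hzQ,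
        SimpleGraph.Walk.cons hadj SimpleGraph.Walk.nil, by simp⟩
    have hzy : z ≠ y := by
      intro hc
      subst hc
      exact hdmin 1 (by omega) ⟨μ, x, z, hμIM, hμsz, hμx, hμy, hxy, hxQ, hyQ,
        SimpleGraph.Walk.cons hadj SimpleGraph.Walk.nil, by simp⟩
    have hνy : ν y ≠ y := by
      intro hc
      exact hdmin q.length (by omega) ⟨ν, z, y, hνIM, hνsz, hνz, hc, hzy, hzQ, hyQ, q, rfl⟩
    -- the alternating sequence
    set a : ℕ → V := fun j => Nat.rec x (fun j' prev => if j' % 2 = 0 then ν prev else μ prev) j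
      with haDef
    have ha0 : a 0 = x := rfl
    have hstep : ∀ j, a (j + 1) = if j % 2 = 0 then ν (a j) else μ (a j) := fun j => rfl
    have hstepν : ∀ j, j % 2 = 0 → a (j + 1) = ν (a j) := by
      intro j hj; rw [hstep j, if_pos hj]
    have hstepμ : ∀ j, j % 2 = 1 → a (j + 1) = μ (a j) := by
      intro j hj; rw [hstep j, if_neg (by omega)]
    have hbackν : ∀ j, j % 2 = 0 → ν (a (j + 1)) = a j := by
      intro j hj; rw [hstepν j hj, hνIM.1]
    have hbackμ : ∀ j, j % 2 = 1 → μ (a (j + 1)) = a j := by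
      intro j hj; rw [hstepμ j hj, hμIM.1]
    have hINJ : ∀ q', (∀ j, j < q' → a (j + 1) ≠ a j) → ∀ p', p' < q' → a p' ≠ a q' := by
      intro q'
      induction q' using Nat.strong_induction_on with
      | _ q' IH =>
        intro hns p' hpq hEq
        by_cases hstall : p' + 1 = q'
        · exact hns p' (by omega) (by rw [hstall]; exact hEq.symm)
        · by_cases hp0 : p' = 0
          · subst hp0
            by_cases hqe : (q' - 1) % 2 = 0
            · have h5 := hbackν (q' - 1) hqe
              rw [show q' - 1 + 1 = q' by omega] at h5
              have h6 : a (q' - 1) = a 1 := by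
                rw [← h5, ← hEq]
                exact (hstepν 0 (by omega)).symm
              exact IH (q' - 1) (by omega) (fun j hj => hns j (by omega)) 1 (by omega) h6.symm
            · have h5 := hbackμ (q' - 1) (by omega)
              rw [show q' - 1 + 1 = q' by omega] at h5
              have h6 : a (q' - 1) = a 0 := by
                rw [← h5, ← hEq, ha0, hμx]
              exact IH (q' - 1) (by omega) (fun j hj => hns j (by omega)) 0 (by omega) h6.symm
          · by_cases hpar : p' % 2 = q' % 2
            · by_cases hpe : (p' - 1) % 2 = 0
              · have h5 := hbackν (p' - 1) hpe
                have h5' := hbackν (q' - 1) (by omega)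
                rw [show p' - 1 + 1 = p' by omega] at h5
                rw [show q' - 1 + 1 = q' by omega] at h5'
                have h6 : a (p' - 1) = a (q' - 1) := by rw [← h5, ← h5', hEq]
                exact IH (q' - 1) (by omega) (fun j hj => hns j (by omega)) (p' - 1)
                  (by omega) h6
              · have h5 := hbackμ (p' - 1) (by omega)
                have h5' := hbackμ (q' - 1) (by omega)
                rw [show p' - 1 + 1 = p' by omega] at h5
                rw [show q' - 1 + 1 = q' by omega] at h5'
                have h6 : a (p' - 1) = a (q' - 1) := by rw [← h5, ← h5', hEq]
                exact IH (q' - 1) (by omega) (fun j hj => hns j (by omega)) (p' - 1)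
                  (by omega) h6
            · by_cases hpe : p' % 2 = 0
              · have h5 : a (p' + 1) = ν (a p') := hstepν p' hpe
                have h5' := hbackν (q' - 1) (by omega)
                rw [show q' - 1 + 1 = q' by omega] at h5'
                have h6 : a (p' + 1) = a (q' - 1) := by rw [h5, hEq, h5']
                exact IH (q' - 1) (by omega) (fun j hj => hns j (by omega)) (p' + 1)
                  (by omega) h6
              · have h5 : a (p' + 1) = μ (a p') := hstepμ p' (by omega)
                have h5' := hbackμ (q' - 1) (by omega)
                rw [show q' - 1 + 1 = q' by omega] at h5'
                have h6 : a (p' + 1) = a (q' - 1) := by rw [h5, hEq, h5']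
                exact IH (q' - 1) (by omega) (fun j hj => hns j (by omega)) (p' + 1)
                  (by omega) h6
    have hstallEx : ∃ j, a (j + 1) = a j := by
      by_contra hcon
      push_neg at hcon
      have hinj2 : Function.Injective a := by
        intro p' q' hpq'
        by_contra hne
        rcases Nat.lt_or_ge p' q' with h5 | h5
        · exact hINJ q' (fun j _ => hcon j) p' h5 hpq'
        · exact hINJ p' (fun j _ => hcon j) q' (by omega) hpq'.symm
      obtain ⟨p', q', hne, heq'⟩ := Finite.exists_ne_map_eq_of_infinite a
      exact hne (hinj2 heq')
    have hJspec : a (Nat.find hstallEx + 1) = a (Nat.find hstallEx) := Nat.find_spec hstallEx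
    set J := Nat.find hstallEx with hJ
    have hJstall : a (J + 1) = a J := hJspec
    have hJmin : ∀ j, j < J → a (j + 1) ≠ a j := fun j hj => Nat.find_min hstallEx hj
    have hJ1 : 1 ≤ J := by
      rcases Nat.eq_zero_or_pos J with h0 | h0
      · exfalso
        have h5 := hJstall
        rw [h0, hstepν 0 (by omega), ha0] at h5
        exact hνx (by rw [← ha0] at h5; rw [ha0] at h5; exact h5)
      · exact h0
    have hInjJ : ∀ p' q', p' < q' → q' ≤ J → a p' ≠ a q' :=
      fun p' q' h1' h2' => hINJ q' (fun j hj => hJmin j (by omega)) p' h1'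
    set S : Set V := {v | ∃ j, j ≤ J ∧ a j = v} with hS
    have hmemS : ∀ j, j ≤ J → a j ∈ S := fun j hj => ⟨j, hj, rfl⟩
    have hμS : ∀ v ∈ S, μ v ∈ S := by
      rintro v ⟨j, hj, rfl⟩
      rcases Nat.eq_zero_or_pos j with h0 | h0
      · rw [h0, ha0, hμx, ← ha0]
        exact hmemS 0 (by omega)
      by_cases hje : j % 2 = 1
      · have h5 : μ (a j) = a (j + 1) := (hstepμ j hje).symm
        rw [h5]
        rcases Nat.lt_or_ge j J with hjJ | hjJ
        · exact hmemS (j + 1) (by omega)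
        · have hjJ' : j = J := by omega
          rw [hjJ', hJstall]
          exact hmemS J (le_refl _)
      · have h5 := hbackμ (j - 1) (by omega)
        rw [show j - 1 + 1 = j by omega] at h5
        rw [h5]
        exact hmemS (j - 1) (by omega)
    have hνS : ∀ v ∈ S, ν v ∈ S := by
      rintro v ⟨j, hj, rfl⟩
      by_cases hje : j % 2 = 0
      · have h5 : ν (a j) = a (j + 1) := (hstepν j hje).symm
        rw [h5]
        rcases Nat.lt_or_ge j J with hjJ | hjJ
        · exact hmemS (j + 1) (by omega)
        · have hjJ' : j = J := by omega
          rw [hjJ', hJstall]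
          exact hmemS J (le_refl _)
      · have h5 := hbackν (j - 1) (by omega)
        rw [show j - 1 + 1 = j by omega] at h5
        rw [h5]
        exact hmemS (j - 1) (by omega)
    have hμSc : ∀ v, v ∉ S → μ v ∉ S := by
      intro v hv hc
      exact hv (by rw [← hμIM.1 v]; exact hμS _ hc)
    have hνSc : ∀ v, v ∉ S → ν v ∉ S := by
      intro v hv hc
      exact hv (by rw [← hνIM.1 v]; exact hνS _ hc)
    have hFμ : ∀ j, j ≤ J → μ (a j) = a j → j = 0 ∨ (j = J ∧ J % 2 = 1) := by
      intro j hj hfix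
      rcases Nat.eq_zero_or_pos j with h0 | h0
      · exact Or.inl h0
      by_cases hje : j % 2 = 1
      · rcases Nat.lt_or_ge j J with hjJ | hjJ
        · exfalso
          have h5 : μ (a j) = a (j + 1) := (hstepμ j hje).symm
          exact hJmin j hjJ (by rw [← h5, hfix])
        · exact Or.inr ⟨by omega, by omega⟩
      · exfalso
        have h5 := hbackμ (j - 1) (by omega)
        rw [show j - 1 + 1 = j by omega] at h5
        have h6 : a j = a (j - 1) := by rw [← h5, hfix]
        refine hJmin (j - 1) (by omega) ?_
        rw [show j - 1 + 1 = j by omega]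
        exact h6
    have hFν : ∀ j, j ≤ J → ν (a j) = a j → j = J ∧ J % 2 = 0 := by
      intro j hj hfix
      by_cases hje : j % 2 = 0
      · rcases Nat.lt_or_ge j J with hjJ | hjJ
        · exfalso
          have h5 : ν (a j) = a (j + 1) := (hstepν j hje).symm
          exact hJmin j hjJ (by rw [← h5, hfix])
        · exact ⟨by omega, by omega⟩
      · exfalso
        have h5 := hbackν (j - 1) (by omega)
        rw [show j - 1 + 1 = j by omega] at h5
        have h6 : a j = a (j - 1) := by rw [← h5, hfix]
        refine hJmin (j - 1) (by omega) ?_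
        rw [show j - 1 + 1 = j by omega]
        exact h6
    have hstallμ : J % 2 = 1 → μ (a J) = a J := fun hJe => (hstepμ J hJe).symm.trans hJstall
    have hstallν : J % 2 = 0 → ν (a J) = a J := fun hJe => (hstepν J hJe).symm.trans hJstall
    have hSncard : S.ncard = J + 1 := by
      have hSeq : S = Set.range (fun j : Fin (J + 1) => a (j : ℕ)) := by
        ext v
        simp only [hS, Set.mem_setOf_eq, Set.mem_range]
        constructor
        · rintro ⟨j, hj, rfl⟩
          exact ⟨⟨j, by omega⟩, rfl⟩
        · rintro ⟨j, rfl⟩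
          exact ⟨(j : ℕ), by omega, rfl⟩
      rw [hSeq, ← Set.image_univ, Set.ncard_image_of_injective _ ?_, Set.ncard_univ,
        Nat.card_eq_fintype_card, Fintype.card_fin]
      intro j j' hjj
      by_contra hne
      rcases Nat.lt_or_ge (j : ℕ) (j' : ℕ) with h5 | h5
      · exact hInjJ _ _ h5 (by omega) hjj
      · have h6 : (j' : ℕ) < (j : ℕ) := by
          rcases Nat.lt_or_ge (j' : ℕ) (j : ℕ) with h6 | h6
          · exact h6
          · exact absurd (Fin.ext (by omega)) hne
        exact hInjJ _ _ h6 (by omega) hjj.symm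
    have hSx : x ∈ S := by rw [← ha0]; exact hmemS 0 (by omega)
    have hSJ : a J ∈ S := hmemS J (le_refl _)
    have hxaJ : x ≠ a J := by
      have h5 := hInjJ 0 J (by omega) (le_refl _)
      rwa [ha0] at h5
    -- the swapped matching on S
    set τ1 : V → V := fun v => if v ∈ S then ν v else μ v with hτ1
    set τ2 : V → V := fun v => if v ∈ S then μ v else ν v with hτ2
    have hτ1S : ∀ v, v ∈ S → τ1 v = ν v := by intro v hv; rw [hτ1]; simp [hv]
    have hτ1Sc : ∀ v, v ∉ S → τ1 v = μ v := by intro v hv; rw [hτ1]; simp [hv]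
    have hτ2S : ∀ v, v ∈ S → τ2 v = μ v := by intro v hv; rw [hτ2]; simp [hv]
    have hτ2Sc : ∀ v, v ∉ S → τ2 v = ν v := by intro v hv; rw [hτ2]; simp [hv]
    have hτ1IM : IM G Q τ1 := by
      constructor
      · intro v
        by_cases hv : v ∈ S
        · rw [hτ1S v hv, hτ1S _ (hνS v hv), hνIM.1]
        · rw [hτ1Sc v hv, hτ1Sc _ (hμSc v hv), hμIM.1]
      · intro v hv
        by_cases hvS : v ∈ S
        · rw [hτ1S v hvS] at hv ⊢
          exact hνIM.2 v hv
        · rw [hτ1Sc v hvS] at hv ⊢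
          exact hμIM.2 v hv
    have hτ2IM : IM G Q τ2 := by
      constructor
      · intro v
        by_cases hv : v ∈ S
        · rw [hτ2S v hv, hτ2S _ (hμS v hv), hμIM.1]
        · rw [hτ2Sc v hv, hτ2Sc _ (hνSc v hv), hνIM.1]
      · intro v hv
        by_cases hvS : v ∈ S
        · rw [hτ2S v hvS] at hv ⊢
          exact hμIM.2 v hv
        · rw [hτ2Sc v hvS] at hv ⊢
          exact hνIM.2 v hv
    by_cases hJe : J % 2 = 1
    · -- J odd : τ1 is a matching of size 2m+2
      have hsupp1 : suppI τ1 = S ∪ (suppI μ \ S) := by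
        ext v
        simp only [suppI, Set.mem_setOf_eq, Set.mem_union, Set.mem_diff]
        by_cases hvS : v ∈ S
        · rw [hτ1S v hvS]
          constructor
          · intro _
            exact Or.inl hvS
          · intro _
            obtain ⟨j, hj, rfl⟩ := hvS
            intro hc
            have := (hFν j hj hc).2
            omega
        · rw [hτ1Sc v hvS]
          constructor
          · intro h5
            exact Or.inr ⟨h5, hvS⟩
          · rintro (h5 | ⟨h5, _⟩)
            · exact absurd h5 hvS
            · exact h5
      have hμcapS : suppI μ ∩ S = S \ {x, a J} := by
        ext v
        simp only [suppI, Set.mem_setOf_eq, Set.mem_inter_iff, Set.mem_diff,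
          Set.mem_insert_iff, Set.mem_singleton_iff]
        constructor
        · rintro ⟨hvμ, hvS⟩
          refine ⟨hvS, ?_⟩
          rintro (rfl | rfl)
          · exact hvμ hμx
          · exact hvμ (hstallμ hJe)
        · rintro ⟨hvS, hvn⟩
          refine ⟨?_, hvS⟩
          obtain ⟨j, hj, rfl⟩ := hvS
          intro hc
          rcases hFμ j hj hc with h0 | ⟨h0, _⟩
          · exact hvn (Or.inl (by rw [h0, ha0]))
          · exact hvn (Or.inr (by rw [h0]))
      have hcap_card : (suppI μ ∩ S).ncard = J - 1 := by
        rw [hμcapS]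
        have h5 : S \ {x, a J} = (S \ {x}) \ {a J} := by
          ext v
          simp only [Set.mem_diff, Set.mem_insert_iff, Set.mem_singleton_iff]
          tauto
        rw [h5, Set.ncard_diff_singleton_of_mem
            ((Set.mem_diff _).mpr ⟨hSJ, by simpa using hxaJ.symm⟩),
          Set.ncard_diff_singleton_of_mem hSx, hSncard]
        omega
      have hsplit := ncard_split (suppI μ) S
      rw [hμsz, hcap_card] at hsplit
      have hτ1card : (suppI τ1).ncard = 2 * m + 2 := by
        rw [hsupp1, ncard_union_glue (fun v hv => hv), hSncard]
        omega
      have := hG2 τ1 hτ1IM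
      omega
    · -- J even
      have hJe' : J % 2 = 0 := by omega
      have hμaJ : μ (a J) ≠ a J := by
        intro hc
        rcases hFμ J (le_refl _) hc with h0 | ⟨_, h0⟩
        · omega
        · omega
      by_cases hzS : z ∈ S
      · -- z = a J ; use τ1, missing z and y, walk q of length d - 1
        have hzw : z = a J := by
          obtain ⟨j, hj, haj⟩ := hzS
          have h5 := hFν j hj (by rw [haj]; exact hνz)
          rw [← haj, h5.1]
        have hsupp1 : suppI τ1 = (S \ {a J}) ∪ (suppI μ \ S) := by
          ext v
          simp only [suppI, Set.mem_setOf_eq, Set.mem_union, Set.mem_diff,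
            Set.mem_singleton_iff]
          by_cases hvS : v ∈ S
          · rw [hτ1S v hvS]
            constructor
            · intro h5
              refine Or.inl ⟨hvS, ?_⟩
              intro hc
              apply h5
              rw [hc]
              exact hstallν hJe'
            · rintro (⟨h5, h6⟩ | ⟨h5, h6⟩)
              · obtain ⟨j, hj, rfl⟩ := hvS
                intro hc
                exact h6 (by rw [(hFν j hj hc).1])
              · exact absurd hvS h6
          · rw [hτ1Sc v hvS]
            constructor
            · intro h5
              exact Or.inr ⟨h5, hvS⟩
            · rintro (⟨h5, _⟩ | ⟨h5, h6⟩)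
              · exact absurd h5 hvS
              · exact h5
        have hμcapS : suppI μ ∩ S = S \ {x} := by
          ext v
          simp only [suppI, Set.mem_setOf_eq, Set.mem_inter_iff, Set.mem_diff,
            Set.mem_singleton_iff]
          constructor
          · rintro ⟨hvμ, hvS⟩
            refine ⟨hvS, ?_⟩
            rintro rfl
            exact hvμ hμx
          · rintro ⟨hvS, hvn⟩
            refine ⟨?_, hvS⟩
            obtain ⟨j, hj, rfl⟩ := hvS
            intro hc
            rcases hFμ j hj hc with h0 | ⟨_, h0⟩
            · exact hvn (by rw [h0, ha0])
            · omega
        have hcap_card : (suppI μ ∩ S).ncard = J := by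
          rw [hμcapS, Set.ncard_diff_singleton_of_mem hSx, hSncard]
          omega
        have hsplit := ncard_split (suppI μ) S
        rw [hμsz, hcap_card] at hsplit
        have hτ1card : (suppI τ1).ncard = 2 * m := by
          rw [hsupp1, ncard_union_glue (fun v hv => hv.1),
            Set.ncard_diff_singleton_of_mem hSJ, hSncard]
          omega
        have hτ1z : τ1 z = z := by
          rw [hτ1S z hzS, hzw]
          exact hstallν hJe'
        have hτ1y : τ1 y = y := by
          have hyS : y ∉ S := by
            rintro ⟨j, hj, haj⟩
            rcases hFμ j hj (by rw [haj]; exact hμy) with h0 | ⟨_, h0⟩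
            · apply hxy
              rw [← haj, h0, ha0]
            · omega
          rw [hτ1Sc y hyS]
          exact hμy
        exact hdmin q.length (by omega)
          ⟨τ1, z, y, hτ1IM, hτ1card, hτ1z, hτ1y, hzy, hzQ, hyQ, q, rfl⟩
      · -- z ∉ S : use τ2, missing x and z, walk of length 1
        have hsupp2 : suppI τ2 = (S \ {x}) ∪ (suppI ν \ S) := by
          ext v
          simp only [suppI, Set.mem_setOf_eq, Set.mem_union, Set.mem_diff,
            Set.mem_singleton_iff]
          by_cases hvS : v ∈ S
          · rw [hτ2S v hvS]
            constructor
            · intro h5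
              refine Or.inl ⟨hvS, ?_⟩
              rintro rfl
              exact h5 hμx
            · rintro (⟨h5, h6⟩ | ⟨h5, h6⟩)
              · obtain ⟨j, hj, rfl⟩ := hvS
                intro hc
                rcases hFμ j hj hc with h0 | ⟨_, h0⟩
                · exact h6 (by rw [h0, ha0])
                · omega
              · exact absurd hvS h6
          · rw [hτ2Sc v hvS]
            constructor
            · intro h5
              exact Or.inr ⟨h5, hvS⟩
            · rintro (⟨h5, _⟩ | ⟨h5, h6⟩)
              · exact absurd h5 hvS
              · exact h5
        have hνcapS : suppI ν ∩ S = S \ {a J} := by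
          ext v
          simp only [suppI, Set.mem_setOf_eq, Set.mem_inter_iff, Set.mem_diff,
            Set.mem_singleton_iff]
          constructor
          · rintro ⟨hvν, hvS⟩
            refine ⟨hvS, ?_⟩
            rintro rfl
            exact hvν (hstallν hJe')
          · rintro ⟨hvS, hvn⟩
            refine ⟨?_, hvS⟩
            obtain ⟨j, hj, rfl⟩ := hvS
            intro hc
            exact hvn (by rw [(hFν j hj hc).1])
        have hcap_card : (suppI ν ∩ S).ncard = J := by
          rw [hνcapS, Set.ncard_diff_singleton_of_mem hSJ, hSncard]
          omega
        have hsplit := ncard_split (suppI ν) S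
        rw [hνsz, hcap_card] at hsplit
        have hτ2card : (suppI τ2).ncard = 2 * m := by
          rw [hsupp2, ncard_union_glue (fun v hv => hv.1),
            Set.ncard_diff_singleton_of_mem hSx, hSncard]
          omega
        have hτ2x : τ2 x = x := by
          rw [hτ2S x hSx]
          exact hμx
        have hτ2z : τ2 z = z := by
          rw [hτ2Sc z hzS]
          exact hνz
        exact hdmin 1 (by omega)
          ⟨τ2, x, z, hτ2IM, hτ2card, hτ2x, hτ2z, hxz, hxQ, hzQ,
            SimpleGraph.Walk.cons hadj SimpleGraph.Walk.nil, by simp⟩
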